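/- For any nonnegative integer r and 0 < μ_j ≤ μ_i, the inequality e^{-μ_j} μ_j^r / ∫_{μ_j}^∞ e^{-t} t^r dt ≤ e^{-μ_i} μ_i^r / ∫_{μ_i}^∞ e^{-t} t^r dt holds. -/

import Mathlib

/-!
Write `f t = exp (-t) * t ^ r`, `a = μj` and `a + d = μi`. Cross-multiplying, the claim becomes
`f a * ∫_{a+d}^∞ f ≤ f (a + d) * ∫_a^∞ f`. Translating the left integral by `d` reduces it to the
pointwise inequality `f a * f (t + d) ≤ f (a + d) * f t` for `t > a`: the exponentials agree, and
`a * (t + d) ≤ (a + d) * t` is `a * d ≤ t * d`.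
-/

open MeasureTheory Set

theorem mul_setIntegral_Ioi_add_le_of_mul_le {f : ℝ → ℝ} {a d : ℝ} (hd : 0 ≤ d)
    (hf : IntegrableOn f (Ioi a)) (h : ∀ t > a, f a * f (t + d) ≤ f (a + d) * f t) :
    f a * ∫ t in Ioi (a + d), f t ≤ f (a + d) * ∫ t in Ioi a, f t := by
  have hshift := measurePreserving_add_right (volume : Measure ℝ) d
  have hpre : (· + d) ⁻¹' Ioi (a + d) = Ioi a := by
    rw [preimage_add_const_Ioi, add_sub_cancel_right]
  have hf_shift : IntegrableOn (fun t => f (t + d)) (Ioi a) := by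
    rw [← hpre]
    exact (hshift.integrableOn_comp_preimage (measurableEmbedding_addRight d)).2
      (hf.mono_set (Ioi_subset_Ioi (le_add_of_nonneg_right hd)))
  rw [← hshift.setIntegral_preimage_emb (measurableEmbedding_addRight d), hpre,
    ← integral_const_mul, ← integral_const_mul]
  exact setIntegral_mono_on (hf_shift.const_mul _) (hf.const_mul _) measurableSet_Ioi h

theorem integrableOn_exp_neg_mul_pow_Ioi (r : ℕ) {a : ℝ} (ha : 0 ≤ a) :
    IntegrableOn (fun t => Real.exp (-t) * t ^ r) (Ioi a) := by
  have h := Real.GammaIntegral_convergent (s := (r : ℝ) + 1) (by positivity)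
  simp only [add_sub_cancel_right, Real.rpow_natCast] at h
  exact h.mono_set (Ioi_subset_Ioi ha)

theorem setIntegral_exp_neg_mul_pow_Ioi_pos (r : ℕ) {a : ℝ} (ha : 0 ≤ a) :
    0 < ∫ t in Ioi a, Real.exp (-t) * t ^ r := by
  have hpos : ∀ t ∈ Ioi a, 0 < Real.exp (-t) * t ^ r := fun t ht => by
    have : 0 < t := ha.trans_lt ht
    positivity
  rw [setIntegral_pos_iff_support_of_nonneg_ae
    (ae_restrict_of_forall_mem measurableSet_Ioi fun t ht => (hpos t ht).le)
    (integrableOn_exp_neg_mul_pow_Ioi r ha),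
    inter_eq_right.2 fun t ht => Function.mem_support.2 (hpos t ht).ne', Real.volume_Ioi]
  exact ENNReal.zero_lt_top

theorem exp_neg_mul_pow_mul_add_le (r : ℕ) {a d t : ℝ} (ha : 0 ≤ a) (hd : 0 ≤ d) (hat : a ≤ t) :
    Real.exp (-a) * a ^ r * (Real.exp (-(t + d)) * (t + d) ^ r)
      ≤ Real.exp (-(a + d)) * (a + d) ^ r * (Real.exp (-t) * t ^ r) := by
  have hexp : Real.exp (-a) * Real.exp (-(t + d)) = Real.exp (-(a + d)) * Real.exp (-t) := by
    rw [← Real.exp_add, ← Real.exp_add]; ring_nf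
  have hpow : (a * (t + d)) ^ r ≤ ((a + d) * t) ^ r :=
    pow_le_pow_left₀ (mul_nonneg ha (by linarith)) (by nlinarith) r
  calc Real.exp (-a) * a ^ r * (Real.exp (-(t + d)) * (t + d) ^ r)
      = (Real.exp (-a) * Real.exp (-(t + d))) * (a * (t + d)) ^ r := by rw [mul_pow]; ring
    _ ≤ (Real.exp (-(a + d)) * Real.exp (-t)) * ((a + d) * t) ^ r := by
        rw [hexp]; gcongr
    _ = Real.exp (-(a + d)) * (a + d) ^ r * (Real.exp (-t) * t ^ r) := by rw [mul_pow]; ring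

theorem upper_gamma_hazard_ineq (r : ℕ) (μi μj : ℝ) (h0 : 0 < μj) (hji : μj ≤ μi) :
    Real.exp (-μj) * μj ^ r / ∫ t in Set.Ioi μj, Real.exp (-t) * t ^ r
      ≤ Real.exp (-μi) * μi ^ r / ∫ t in Set.Ioi μi, Real.exp (-t) * t ^ r := by
  obtain ⟨d, hd, rfl⟩ : ∃ d, 0 ≤ d ∧ μi = μj + d := ⟨μi - μj, by linarith, by ring⟩
  rw [div_le_div_iff₀ (setIntegral_exp_neg_mul_pow_Ioi_pos r h0.le)
    (setIntegral_exp_neg_mul_pow_Ioi_pos r (by positivity))]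
  exact mul_setIntegral_Ioi_add_le_of_mul_le hd (integrableOn_exp_neg_mul_pow_Ioi r h0.le)
    fun t ht => exp_neg_mul_pow_mul_add_le r h0.le hd ht.le
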